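/- Let p be a prime and for k ≥ 0 let a_p(k) denote the number of orbits of the right-multiplication action of SL(2, ℤ/pℤ) on k×2 matrices over ℤ/pℤ. Then for every n ≥ 1, a_p(n+1) − a_p(n) = p^{n−1}(pⁿ + p − 1). -/

import Mathlib

/-- The orbit relation of the right-multiplication action of `SL(2, ℤ/pℤ)`
on `k × 2` matrices over `ℤ/pℤ`. -/
def slOrbRel (p k : ℕ) :
    Matrix (Fin k) (Fin 2) (ZMod p) → Matrix (Fin k) (Fin 2) (ZMod p) → Prop :=
  fun M N => ∃ A : Matrix.SpecialLinearGroup (Fin 2) (ZMod p),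
    M * (A : Matrix (Fin 2) (Fin 2) (ZMod p)) = N

/-- `a_p(k)`: the number of orbits of `SL(2, ℤ/pℤ)` on `k × 2` matrices over `ℤ/pℤ`. -/
noncomputable def slOrbCount (p k : ℕ) : ℕ := Nat.card (Quot (slOrbRel p k))

/-!
Burnside's lemma, for `SL(2, F)` with `F` a field of `q` elements acting by `X ↦ X * A`.
A matrix is fixed by `A` iff its rows lie in the fixed space `ker (A - 1)` of `A` acting on row
vectors, so `A` fixes `q ^ (k * d A)` matrices, `d A = dim ker (A - 1)`. Since
`det (A - 1) = 2 - tr A`, `d A` is `2` for `A = 1`, `1` for the `q² - 1` other elements of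
trace `2`, and `0` otherwise. With `|SL(2, F)| = q³ - q` this gives the closed formula
`(q³ - q) a(k) = q^(2k) + (q² - 1) q^k + q³ - q² - q`, of which the theorem is the difference.
-/

open Matrix MulAction MulOpposite Module

namespace Matrix.SpecialLinearGroup

variable {m n R : Type*} [Fintype n] [DecidableEq n] [CommRing R]

instance : MulAction (SpecialLinearGroup n R)ᵐᵒᵖ (Matrix m n R) where
  smul A M := M * (A.unop : Matrix n n R)
  one_smul := Matrix.mul_one
  mul_smul _ _ M := (Matrix.mul_assoc M _ _).symm

lemma orbitRel_op_iff (M N : Matrix m n R) :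
    orbitRel (SpecialLinearGroup n R)ᵐᵒᵖ (Matrix m n R) N M ↔
      ∃ A : SpecialLinearGroup n R, M * (A : Matrix n n R) = N := by
  rw [orbitRel_apply, mem_orbit_iff, op_surjective.exists]
  rfl

lemma range_toGL_eq_ker_det :
    (toGL : SpecialLinearGroup n R →* GL n R).range =
      (GeneralLinearGroup.det : GL n R →* Rˣ).ker := by
  ext g
  constructor
  · rintro ⟨A, rfl⟩
    exact coeToGL_det A
  · intro hg
    exact ⟨⟨g, congrArg Units.val hg⟩, Units.ext rfl⟩

lemma natCard_mul_natCard_units [Nonempty n] :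
    Nat.card (SpecialLinearGroup n R) * Nat.card Rˣ = Nat.card (GL n R) := by
  let det : GL n R →* Rˣ := GeneralLinearGroup.det
  have hSL : Nat.card (SpecialLinearGroup n R) = Nat.card det.ker := by
    rw [← range_toGL_eq_ker_det]
    exact Nat.card_congr (MonoidHom.ofInjective toGL_injective).toEquiv
  have hindex : det.ker.index = Nat.card Rˣ := by
    rw [Subgroup.index_ker, MonoidHom.range_eq_top.mpr GeneralLinearGroup.det_surjective,
      Subgroup.card_top]
  rw [hSL, ← hindex, Subgroup.card_mul_index]

end Matrix.SpecialLinearGroup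

lemma MulAction.natCard_orbits_mul_natCard_eq_sum (G X : Type*) [Group G] [Fintype G]
    [MulAction G X] [Finite X] :
    Nat.card (orbitRel.Quotient G X) * Nat.card G = ∑ g : G, Nat.card (fixedBy X g) := by
  classical
  have := Fintype.ofFinite X
  simp only [Nat.card_eq_fintype_card]
  exact (sum_card_fixedBy_eq_card_orbits_mul_card_group G X).symm

lemma det_sub_one_fin_two {R : Type*} [CommRing R] (A : Matrix (Fin 2) (Fin 2) R) :
    (A - 1).det = A.det - A.trace + 1 := by
  simp only [det_fin_two, trace_fin_two, Matrix.sub_apply, one_apply_eq, one_apply_ne,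
    zero_ne_one, one_ne_zero, ne_eq, not_false_eq_true, sub_zero]
  ring

lemma mul_eq_self_iff_forall_mem_ker {R m n : Type*} [Ring R] [Fintype n] [DecidableEq n]
    (M : Matrix n n R) (X : Matrix m n R) :
    X * M = X ↔ ∀ i, X i ∈ LinearMap.ker (M - 1).vecMulLinear := by
  simp only [LinearMap.mem_ker, vecMulLinear_apply, ← mul_apply_eq_vecMul]
  rw [Matrix.mul_sub, Matrix.mul_one]
  exact sub_eq_zero.symm.trans funext_iff

section FiniteField

variable {F : Type*} [Field F]

lemma natCard_mul_eq_self {m n : Type*} [Fintype m] [Fintype n] [DecidableEq n] [Finite F]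
    (M : Matrix n n F) :
    Nat.card {X : Matrix m n F // X * M = X} =
      (Nat.card F ^ finrank F (LinearMap.ker (M - 1).vecMulLinear)) ^ Fintype.card m := by
  rw [Nat.card_congr ((Equiv.subtypeEquivRight (mul_eq_self_iff_forall_mem_ker M)).trans
    Equiv.subtypePiEquivPi), Nat.card_pi, Finset.prod_const, Finset.card_univ,
    Module.natCard_eq_pow_finrank (K := F)]

lemma finrank_ker_vecMulLinear_eq_zero_iff {n : Type*} [Fintype n] [DecidableEq n]
    (B : Matrix n n F) : finrank F (LinearMap.ker B.vecMulLinear) = 0 ↔ B.det ≠ 0 := by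
  rw [Submodule.finrank_eq_zero, LinearMap.ker_eq_bot', Ne, ← exists_vecMul_eq_zero_iff]
  simp only [vecMulLinear_apply, not_exists, not_and, not_imp_not]

lemma finrank_ker_vecMulLinear_eq_card_iff {n : Type*} [Fintype n] (B : Matrix n n F) :
    finrank F (LinearMap.ker B.vecMulLinear) = Fintype.card n ↔ B = 0 := by
  constructor
  · intro h
    have hker : LinearMap.ker B.vecMulLinear = ⊤ :=
      Submodule.eq_top_of_finrank_eq (h.trans (Module.finrank_fintype_fun_eq_card F).symm)
    rw [LinearMap.ker_eq_top] at hker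
    exact ext_iff_vecMul.mpr fun v => by simpa using LinearMap.congr_fun hker v
  · rintro rfl
    have hzero : (0 : Matrix n n F).vecMulLinear = 0 := by ext; simp
    rw [hzero, LinearMap.ker_zero, finrank_top, Module.finrank_fintype_fun_eq_card]

lemma finrank_ker_vecMulLinear_sub_one_fin_two [DecidableEq F] (A : SpecialLinearGroup (Fin 2) F) :
    finrank F (LinearMap.ker ((A : Matrix (Fin 2) (Fin 2) F) - 1).vecMulLinear) =
      if A = 1 then 2 else if (A : Matrix (Fin 2) (Fin 2) F).trace = 2 then 1 else 0 := by
  set d := finrank F (LinearMap.ker ((A : Matrix (Fin 2) (Fin 2) F) - 1).vecMulLinear)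
  have hle : d ≤ 2 := (Submodule.finrank_le _).trans (Module.finrank_fin_fun F).le
  have h2 : d = 2 ↔ A = 1 := by
    have h := finrank_ker_vecMulLinear_eq_card_iff ((A : Matrix (Fin 2) (Fin 2) F) - 1)
    rw [Fintype.card_fin, sub_eq_zero] at h
    exact h.trans ⟨fun h1 => Subtype.ext h1, by rintro rfl; rfl⟩
  have h0 : d = 0 ↔ (A : Matrix (Fin 2) (Fin 2) F).trace ≠ 2 := by
    rw [finrank_ker_vecMulLinear_eq_zero_iff, det_sub_one_fin_two, A.det_coe, sub_add_eq_add_sub,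
      one_add_one_eq_two, sub_ne_zero, ne_comm]
  split_ifs with h1 htr
  · exact h2.mpr h1
  · have hd0 : d ≠ 0 := fun h => h0.mp h htr
    have hd2 : d ≠ 2 := fun h => h1 (h2.mp h)
    omega
  · exact h0.mpr htr

def traceEqTwoEquiv :
    {A : SpecialLinearGroup (Fin 2) F // (A : Matrix (Fin 2) (Fin 2) F).trace = 2} ≃
      Σ a : F, {x : F × F // x.1 * x.2 = -(a - 1) ^ 2} where
  toFun A := ⟨A.1 0 0, (A.1 0 1, A.1 1 0), by
    have hdet := A.1.det_coe
    have htr := A.2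
    rw [det_fin_two] at hdet
    rw [trace_fin_two] at htr
    linear_combination A.1 0 0 * htr - hdet⟩
  invFun x := ⟨⟨!![x.1, x.2.1.1; x.2.1.2, 2 - x.1], by
    rw [det_fin_two_of]
    linear_combination -x.2.2⟩, by
    rw [trace_fin_two_of]
    ring⟩
  left_inv A := by
    have htr := A.2
    rw [trace_fin_two] at htr
    ext i j
    fin_cases i <;> fin_cases j <;> simp
    linear_combination -htr
  right_inv x := by
    simp

variable [Fintype F]

lemma natCard_SL_two :
    (Nat.card (SpecialLinearGroup (Fin 2) F) : ℤ) = Nat.card F ^ 3 - Nat.card F := by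
  have h := SpecialLinearGroup.natCard_mul_natCard_units (n := Fin 2) (R := F)
  rw [Nat.card_units, card_GL_field, Fin.prod_univ_two, Fin.val_zero, Fin.val_one, pow_zero,
    pow_one, ← Nat.card_eq_fintype_card] at h
  have hq : 2 ≤ Nat.card F := by
    rw [Nat.card_eq_fintype_card]
    exact Fintype.one_lt_card
  have hq2 : Nat.card F ≤ Nat.card F ^ 2 := Nat.le_self_pow two_ne_zero _
  have hq1 : 1 ≤ Nat.card F ^ 2 := Nat.one_le_pow _ _ (by omega)
  zify [hq2, hq1, show 1 ≤ Nat.card F by omega] at h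
  have hq' : (Nat.card F : ℤ) - 1 ≠ 0 := by omega
  apply mul_right_cancel₀ hq'
  linear_combination h

variable [DecidableEq F]

lemma natCard_mul_eq (s : F) :
    Nat.card {x : F × F // x.1 * x.2 = s} = Nat.card F - 1 + if s = 0 then Nat.card F else 0 := by
  rw [Nat.card_congr (Equiv.subtypeProdEquivSigmaSubtype fun a b => a * b = s), Nat.card_sigma,
    Fintype.sum_eq_add_sum_compl 0]
  have hunit : ∀ a ∈ ({0}ᶜ : Finset F), Nat.card {b // a * b = s} = 1 := fun a ha => by
    have ha : a ≠ 0 := by simpa using ha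
    rw [Nat.card_congr (Equiv.subtypeEquivRight (q := (· = a⁻¹ * s)) fun b => by
      rw [eq_inv_mul_iff_mul_eq₀ ha]), Nat.card_unique]
  rw [Finset.sum_congr rfl hunit, Finset.sum_const, Finset.card_compl, Finset.card_singleton,
    smul_eq_mul, mul_one, ← Nat.card_eq_fintype_card, add_comm]
  split_ifs with hs
  · simp [hs]
  · simp [Ne.symm hs]

lemma natCard_traceEqTwo :
    Nat.card {A : SpecialLinearGroup (Fin 2) F // (A : Matrix (Fin 2) (Fin 2) F).trace = 2} =
      Nat.card F ^ 2 := by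
  rw [Nat.card_congr traceEqTwoEquiv, Nat.card_sigma]
  simp only [natCard_mul_eq, neg_eq_zero, pow_eq_zero_iff two_ne_zero, sub_eq_zero,
    Finset.sum_add_distrib, Finset.sum_const, Finset.sum_ite_eq', Finset.mem_univ, if_true,
    Finset.card_univ, smul_eq_mul, ← Nat.card_eq_fintype_card]
  rw [Nat.mul_sub_one, Nat.sub_add_cancel (Nat.le_mul_self _), sq]

lemma sum_pow_finrank_ker_vecMulLinear_sub_one (x : ℤ) :
    ∑ A : SpecialLinearGroup (Fin 2) F,
        x ^ finrank F (LinearMap.ker ((A : Matrix (Fin 2) (Fin 2) F) - 1).vecMulLinear) =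
      x ^ 2 + (Nat.card F ^ 2 - 1) * x + (Nat.card F ^ 3 - Nat.card F ^ 2 - Nat.card F) := by
  have hterm : ∀ A : SpecialLinearGroup (Fin 2) F,
      x ^ finrank F (LinearMap.ker ((A : Matrix (Fin 2) (Fin 2) F) - 1).vecMulLinear) =
        1 + (if (A : Matrix (Fin 2) (Fin 2) F).trace = 2 then x - 1 else 0) +
          (if A = 1 then x ^ 2 - x else 0) := by
    intro A
    rw [finrank_ker_vecMulLinear_sub_one_fin_two]
    split_ifs with h1 htr
    · ring
    · simp [h1, trace_one] at htr
    · ring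
    · ring
  simp only [hterm, Finset.sum_add_distrib, Finset.sum_ite, Finset.sum_const_zero, add_zero,
    Finset.sum_const, Finset.card_univ, Finset.filter_eq', Finset.mem_univ, if_true,
    Finset.card_singleton, ← Fintype.card_subtype, ← Nat.card_eq_fintype_card, natCard_traceEqTwo,
    nsmul_eq_mul, one_smul, Nat.cast_pow, natCard_SL_two]
  ring

lemma natCard_orbits_mul_eq (k : ℕ) :
    (Nat.card (orbitRel.Quotient (SpecialLinearGroup (Fin 2) F)ᵐᵒᵖ (Matrix (Fin k) (Fin 2) F)) :
        ℤ) * (Nat.card F ^ 3 - Nat.card F) =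
      (Nat.card F ^ k) ^ 2 + (Nat.card F ^ 2 - 1) * Nat.card F ^ k +
        (Nat.card F ^ 3 - Nat.card F ^ 2 - Nat.card F) := by
  have hfix (A : SpecialLinearGroup (Fin 2) F) :
      Nat.card (fixedBy (Matrix (Fin k) (Fin 2) F) (op A)) = (Nat.card F ^ k) ^
        finrank F (LinearMap.ker ((A : Matrix (Fin 2) (Fin 2) F) - 1).vecMulLinear) := by
    have h := natCard_mul_eq_self (m := Fin k) (A : Matrix (Fin 2) (Fin 2) F)
    rwa [Fintype.card_fin, ← pow_mul, mul_comm, pow_mul] at h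
  let _ : Fintype (SpecialLinearGroup (Fin 2) F)ᵐᵒᵖ := Fintype.ofEquiv _ opEquiv
  have hburnside := natCard_orbits_mul_natCard_eq_sum (SpecialLinearGroup (Fin 2) F)ᵐᵒᵖ
    (Matrix (Fin k) (Fin 2) F)
  rw [Nat.card_congr opEquiv.symm, ← Equiv.sum_comp opEquiv] at hburnside
  simp only [opEquiv_apply, hfix] at hburnside
  rw [← natCard_SL_two, ← sum_pow_finrank_ker_vecMulLinear_sub_one]
  exact_mod_cast hburnside

end FiniteField

lemma slOrbCount_eq_natCard_orbits (p k : ℕ) :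
    slOrbCount p k = Nat.card (orbitRel.Quotient (SpecialLinearGroup (Fin 2) (ZMod p))ᵐᵒᵖ
      (Matrix (Fin k) (Fin 2) (ZMod p))) :=
  Nat.card_congr <| Quot.congrRight fun M N =>
    (SpecialLinearGroup.orbitRel_op_iff M N).symm.trans (orbitRel _ _).comm'

theorem orbit_count_difference (p n : ℕ) [Fact p.Prime] (hn : 1 ≤ n) :
    (slOrbCount p (n + 1) : ℤ) - slOrbCount p n =
      (p : ℤ) ^ (n - 1) * ((p : ℤ) ^ n + p - 1) := by
  obtain ⟨m, rfl⟩ := Nat.exists_eq_add_of_le' hn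
  have hcount (k : ℕ) := natCard_orbits_mul_eq (F := ZMod p) k
  simp only [Nat.card_zmod, ← slOrbCount_eq_natCard_orbits] at hcount
  have hp : (2 : ℤ) ≤ p := mod_cast (Fact.out : p.Prime).two_le
  have hq : (p : ℤ) ^ 3 - p ≠ 0 := by
    nlinarith [mul_pos (by omega : (0 : ℤ) < p) (by nlinarith : (0 : ℤ) < p ^ 2 - 1)]
  apply mul_right_cancel₀ hq
  rw [Nat.add_sub_cancel, sub_mul, hcount, hcount]
  ring
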